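/- In BiND⇐_prop, the sequent −(A₀ ← A₁) ⊢ +(A₀ → A₁) is provable: from rejection of the but-not formula A₀ ← A₁ one can derive acceptance of the implication A₀ → A₁. -/

import Mathlib

set_option autoImplicit true
set_option relaxedAutoImplicit true

/-- Formulae of the bilateral propositional language with ¬, →, ← (but-not), ∧, ∨. -/
inductive Fm : Type
  | pv : ℕ → Fm                 -- propositional variable
  | neg : Fm → Fm               -- ¬A
  | imp : Fm → Fm → Fm          -- A → B
  | bnot : Fm → Fm → Fm         -- A ← B  (but-not)
  | and : Fm → Fm → Fm
  | or : Fm → Fm → Fm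
deriving DecidableEq

/-- Signed (polarized) formulae: +A (acceptance) and −A (rejection). -/
inductive SF : Type
  | pl : Fm → SF
  | mi : Fm → SF
deriving DecidableEq

/-- Conjugation swaps polarities. -/
def SF.star : SF → SF
  | .pl A => .mi A
  | .mi A => .pl A

mutual
/-- Provability in the bilateral natural deduction BiND⇐_prop:
`Drv Γ a` means the signed formula `a` is derivable from assumptions `Γ`. -/
inductive Drv : Set SF → SF → Prop
  | hyp {Γ a} : a ∈ Γ → Drv Γ a
  /-- (Reductio): if ⊥ is derivable from Γ, 𝒜, then conclude 𝒜*. -/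
  | reductio {Γ} (a : SF) : Absurd (insert a Γ) → Drv Γ a.star
  | negIp {Γ A} : Drv Γ (.mi A) → Drv Γ (.pl (.neg A))
  | negEp {Γ A} : Drv Γ (.pl (.neg A)) → Drv Γ (.mi A)
  | negIm {Γ A} : Drv Γ (.pl A) → Drv Γ (.mi (.neg A))
  | negEm {Γ A} : Drv Γ (.mi (.neg A)) → Drv Γ (.pl A)
  | impIp {Γ A0 A1} : Drv (insert (.pl A0) Γ) (.pl A1) → Drv Γ (.pl (.imp A0 A1))
  | impEp {Γ A0 A1} : Drv Γ (.pl (.imp A0 A1)) → Drv Γ (.pl A0) → Drv Γ (.pl A1)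
  | impIm {Γ A0 A1} : Drv Γ (.pl A0) → Drv Γ (.mi A1) → Drv Γ (.mi (.imp A0 A1))
  | impEm0 {Γ A0 A1} : Drv Γ (.mi (.imp A0 A1)) → Drv Γ (.pl A0)
  | impEm1 {Γ A0 A1} : Drv Γ (.mi (.imp A0 A1)) → Drv Γ (.mi A1)
  | andIp {Γ A0 A1} : Drv Γ (.pl A0) → Drv Γ (.pl A1) → Drv Γ (.pl (.and A0 A1))
  | andEp0 {Γ A0 A1} : Drv Γ (.pl (.and A0 A1)) → Drv Γ (.pl A0)
  | andEp1 {Γ A0 A1} : Drv Γ (.pl (.and A0 A1)) → Drv Γ (.pl A1)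
  | andIm0 {Γ A0 A1} : Drv Γ (.mi A0) → Drv Γ (.mi (.and A0 A1))
  | andIm1 {Γ A0 A1} : Drv Γ (.mi A1) → Drv Γ (.mi (.and A0 A1))
  | andEm {Γ A0 A1 a} : Drv Γ (.mi (.and A0 A1)) →
      Drv (insert (.mi A0) Γ) a → Drv (insert (.mi A1) Γ) a → Drv Γ a
  | orIp0 {Γ A0 A1} : Drv Γ (.pl A0) → Drv Γ (.pl (.or A0 A1))
  | orIp1 {Γ A0 A1} : Drv Γ (.pl A1) → Drv Γ (.pl (.or A0 A1))
  | orEp {Γ A0 A1 a} : Drv Γ (.pl (.or A0 A1)) →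
      Drv (insert (.pl A0) Γ) a → Drv (insert (.pl A1) Γ) a → Drv Γ a
  | orIm {Γ A0 A1} : Drv Γ (.mi A0) → Drv Γ (.mi A1) → Drv Γ (.mi (.or A0 A1))
  | orEm0 {Γ A0 A1} : Drv Γ (.mi (.or A0 A1)) → Drv Γ (.mi A0)
  | orEm1 {Γ A0 A1} : Drv Γ (.mi (.or A0 A1)) → Drv Γ (.mi A1)
  | bnotIp {Γ A0 A1} : Drv Γ (.pl A0) → Drv Γ (.mi A1) → Drv Γ (.pl (.bnot A0 A1))
  | bnotEp0 {Γ A0 A1} : Drv Γ (.pl (.bnot A0 A1)) → Drv Γ (.pl A0)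
  | bnotEp1 {Γ A0 A1} : Drv Γ (.pl (.bnot A0 A1)) → Drv Γ (.mi A1)
  | bnotIm {Γ A0 A1} : Drv (insert (.mi A1) Γ) (.mi A0) → Drv Γ (.mi (.bnot A0 A1))
  | bnotEm {Γ A0 A1} : Drv Γ (.mi (.bnot A0 A1)) → Drv Γ (.mi A1) → Drv Γ (.mi A0)

/-- `Absurd Γ` : the contradiction ⊥ is derivable from Γ (Non-contradiction). -/
inductive Absurd : Set SF → Prop
  | nc {Γ a} : Drv Γ a → Drv Γ a.star → Absurd Γ
end

theorem Drv.pl_of_absurd_insert_mi {Γ : Set SF} {A : Fm} (h : Absurd (insert (.mi A) Γ)) :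
    Drv Γ (.pl A) :=
  .reductio (.mi A) h

/-- From `−(A₀ ← A₁)`, `+A₀` and `−A₁`, the rule `−←E` yields `−A₀`, clashing with `+A₀`. -/
theorem Drv.pl_imp_of_mi_bnot_mem {Γ : Set SF} {A0 A1 : Fm} (h : .mi (.bnot A0 A1) ∈ Γ) :
    Drv Γ (.pl (.imp A0 A1)) := by
  refine .impIp (.pl_of_absurd_insert_mi ?_)
  have accept : Drv (insert (.mi A1) (insert (.pl A0) Γ)) (.pl A0) := .hyp (.inr (.inl rfl))
  have reject : Drv (insert (.mi A1) (insert (.pl A0) Γ)) (.mi A0) :=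
    .bnotEm (.hyp (.inr (.inr h))) (.hyp (.inl rfl))
  exact .nc accept reject

/-- Proposition 3(4): −(A₀ ← A₁) ⊢ +(A₀ → A₁) is provable in BiND⇐_prop. -/
theorem minus_bnot_entails_plus_imp (A0 A1 : Fm) :
    Drv {SF.mi (Fm.bnot A0 A1)} (SF.pl (Fm.imp A0 A1)) :=
  .pl_imp_of_mi_bnot_mem rfl
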